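/- Decay of a non-quadratic energy (abstract form of Proposition 2.4): Let C₁, C₂, C₃, λ₁ > 0 be constants. Let a, f, g : [0,∞) → ℝ be differentiable and nonnegative, and let d, h : [0,∞) → ℝ be nonnegative, and suppose that for all t ≥ 0: (i) a′(t) + 2 f(t)² ≤ C₁ g(t) d(t); (ii) f′(t) + (1/C₂) d(t) ≤ C₃ f(t); (iii) g′(t) + (1/C₂) g(t) ≤ 0; (iv) 2 g(t) g′(t) + 2 h(t)² ≤ 0; (v) λ₁ g(t)² ≤ h(t)². Then for every ε > 0 there exist constants c₁ > 0 and c₂ > 0, depending only on C₁, C₂, C₃, λ₁ and ε, such that for all t ≥ 0 the function E(t) = a(t) + c₁ f(t) g(t) + c₂ g(t)² satisfies E′(t) + (2 − ε) f(t)² + d(t) g(t) + h(t)² ≤ 0. (In the paper, this is applied with a = ‖u‖²_{L²}, f = ‖∇u‖_{L²}, g = ‖∇Q(u)‖_{L²}, d = ‖Δu‖_{L²}, h = ‖div u‖_{L²} for a solution u of the extended Stokes equations; hypotheses (i)–(iv) are the derived energy inequalities and (v) is the Poincaré inequality.) -/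

import Mathlib

/-!
Differentiating `E = a + c₁ f g + c₂ g²` and inserting (i)–(iv) bounds `E′` by
`-2 f² + (C₁ - c₁ / C₂) d g + c₁ C₃ f g - 2 c₂ h²`, the term `c₁ f g′` being nonpositive
since (iii) forces `g′ ≤ 0`. Choosing `c₁ = C₂ (C₁ + 1)` turns the `d g` coefficient into `-1`.
The only term of indefinite size, `c₁ C₃ f g`, is split by Young's inequality into `ε f²` and a
multiple of `g²`, which the Poincaré inequality (v) converts into a multiple of `h²`; `c₂` is then
chosen so that `-2 c₂ h²` absorbs it and leaves exactly `-h²`.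
-/

theorem mul_mul_le_mul_sq_add_div_mul_sq {ε : ℝ} (hε : 0 < ε) (b x y : ℝ) :
    b * x * y ≤ ε * x ^ 2 + b ^ 2 / (4 * ε) * y ^ 2 := by
  have hsq : ε * x ^ 2 + b ^ 2 / (4 * ε) * y ^ 2 - b * x * y =
      (2 * ε * x - b * y) ^ 2 / (4 * ε) := by
    field_simp
    ring
  have : 0 ≤ (2 * ε * x - b * y) ^ 2 / (4 * ε) := by positivity
  linarith

theorem mul_mul_le_of_poincare {ε lam b K x y z : ℝ} (hε : 0 < ε) (hlam : 0 < lam)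
    (hK : b ^ 2 ≤ 4 * ε * lam * K) (hP : lam * y ^ 2 ≤ z ^ 2) :
    b * x * y ≤ ε * x ^ 2 + K * z ^ 2 := by
  have hK₀ : 0 ≤ K := by
    by_contra! hneg
    nlinarith [sq_nonneg b, mul_pos hε hlam]
  have hcoeff : b ^ 2 / (4 * ε) ≤ lam * K := by
    rw [div_le_iff₀ (by positivity)]
    linarith
  calc b * x * y ≤ ε * x ^ 2 + b ^ 2 / (4 * ε) * y ^ 2 :=
        mul_mul_le_mul_sq_add_div_mul_sq hε b x y
    _ ≤ ε * x ^ 2 + K * z ^ 2 := by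
      nlinarith [mul_le_mul_of_nonneg_right hcoeff (sq_nonneg y), mul_le_mul_of_nonneg_left hP hK₀]

theorem hasDerivWithinAt_add_mul_mul_add_mul_sq {a f g : ℝ → ℝ} {a' f' g' : ℝ} {s : Set ℝ}
    {t : ℝ} (c₁ c₂ : ℝ) (ha : HasDerivWithinAt a a' s t) (hf : HasDerivWithinAt f f' s t)
    (hg : HasDerivWithinAt g g' s t) :
    HasDerivWithinAt (fun s => a s + c₁ * (f s * g s) + c₂ * g s ^ 2)
      (a' + c₁ * (f' * g t + f t * g') + c₂ * (2 * g t * g')) s t := by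
  refine ((ha.add ((hf.mul hg).const_mul c₁)).add ((hg.pow 2).const_mul c₂)).congr_deriv ?_
  ring

theorem energy_dissipation_le_zero {C₁ C₂ C₃ lam ε c₁ c₂ a' f f' g g' d h : ℝ}
    (hC₂ : 0 < C₂) (hε : 0 < ε) (hlam : 0 < lam) (hc₁ : 0 ≤ c₁) (hc₁C : C₂ * (C₁ + 1) ≤ c₁)
    (hc₂ : (c₁ * C₃) ^ 2 ≤ 4 * ε * lam * (2 * c₂ - 1))
    (hf : 0 ≤ f) (hg : 0 ≤ g) (hd : 0 ≤ d)
    (ha' : a' + 2 * f ^ 2 ≤ C₁ * g * d) (hf' : f' + (1 / C₂) * d ≤ C₃ * f)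
    (hg' : g' + (1 / C₂) * g ≤ 0) (hgg' : 2 * g * g' + 2 * h ^ 2 ≤ 0)
    (hP : lam * g ^ 2 ≤ h ^ 2) :
    a' + c₁ * (f' * g + f * g') + c₂ * (2 * g * g') + (2 - ε) * f ^ 2 + d * g + h ^ 2 ≤ 0 := by
  have hg'_nonpos : g' ≤ 0 := by
    have : 0 ≤ 1 / C₂ * g := by positivity
    linarith
  have hc₂_nonneg : 0 ≤ c₂ := by
    by_contra! hneg
    nlinarith [sq_nonneg (c₁ * C₃), mul_pos hε hlam]
  have hfg' : c₁ * (f * g') ≤ 0 :=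
    mul_nonpos_of_nonneg_of_nonpos hc₁ (mul_nonpos_of_nonneg_of_nonpos hf hg'_nonpos)
  have hc₁_div : C₁ + 1 ≤ c₁ * (1 / C₂) := by
    rw [mul_one_div, le_div_iff₀ hC₂]
    linarith
  have hf'g : c₁ * (f' * g) ≤ c₁ * C₃ * f * g - (C₁ + 1) * (d * g) := by
    have := mul_le_mul_of_nonneg_left (mul_le_mul_of_nonneg_right hf' hg) hc₁
    nlinarith [mul_le_mul_of_nonneg_right hc₁_div (mul_nonneg hd hg)]
  have hgg'_c₂ : c₂ * (2 * g * g') ≤ -(2 * c₂ * h ^ 2) := by nlinarith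
  have hyoung := mul_mul_le_of_poincare (x := f) hε hlam hc₂ hP
  linarith

theorem nonquadratic_energy_decay_general
    (C₁ C₂ C₃ lam₁ : ℝ) (hC₁ : 0 < C₁) (hC₂ : 0 < C₂)
    (hlam : 0 < lam₁) (ε : ℝ) (hε : 0 < ε) :
    ∃ c₁ > (0:ℝ), ∃ c₂ > (0:ℝ),
      ∀ a a' f f' g g' d h : ℝ → ℝ,
        (∀ t, 0 ≤ t → HasDerivWithinAt a (a' t) (Set.Ici 0) t) →
        (∀ t, 0 ≤ t → HasDerivWithinAt f (f' t) (Set.Ici 0) t) →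
        (∀ t, 0 ≤ t → HasDerivWithinAt g (g' t) (Set.Ici 0) t) →
        (∀ t, 0 ≤ t → 0 ≤ a t) → (∀ t, 0 ≤ t → 0 ≤ f t) →
        (∀ t, 0 ≤ t → 0 ≤ g t) → (∀ t, 0 ≤ t → 0 ≤ d t) →
        (∀ t, 0 ≤ t → 0 ≤ h t) →
        (∀ t, 0 ≤ t → a' t + 2 * f t ^ 2 ≤ C₁ * g t * d t) →
        (∀ t, 0 ≤ t → f' t + (1 / C₂) * d t ≤ C₃ * f t) →
        (∀ t, 0 ≤ t → g' t + (1 / C₂) * g t ≤ 0) →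
        (∀ t, 0 ≤ t → 2 * g t * g' t + 2 * h t ^ 2 ≤ 0) →
        (∀ t, 0 ≤ t → lam₁ * g t ^ 2 ≤ h t ^ 2) →
        ∀ t, 0 ≤ t →
          HasDerivWithinAt (fun s => a s + c₁ * (f s * g s) + c₂ * g s ^ 2)
            (a' t + c₁ * (f' t * g t + f t * g' t) + c₂ * (2 * g t * g' t))
            (Set.Ici 0) t ∧
          a' t + c₁ * (f' t * g t + f t * g' t) + c₂ * (2 * g t * g' t)
            + (2 - ε) * f t ^ 2 + d t * g t + h t ^ 2 ≤ 0 := by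
  set c₁ := C₂ * (C₁ + 1)
  have hc₁ : 0 < c₁ := by positivity
  set c₂ := (1 + (c₁ * C₃) ^ 2 / (4 * ε * lam₁)) / 2
  have hc₂ : (c₁ * C₃) ^ 2 ≤ 4 * ε * lam₁ * (2 * c₂ - 1) := by
    simp only [c₂]
    field_simp
    linarith
  refine ⟨c₁, hc₁, c₂, by positivity, ?_⟩
  intro a a' f f' g g' d h ha hf hg _ hf₀ hg₀ hd₀ _ hi hii hiii hiv hv t ht
  exact ⟨hasDerivWithinAt_add_mul_mul_add_mul_sq _ _ (ha t ht) (hf t ht) (hg t ht),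
    energy_dissipation_le_zero hC₂ hε hlam hc₁.le le_rfl hc₂ (hf₀ t ht) (hg₀ t ht) (hd₀ t ht)
      (hi t ht) (hii t ht) (hiii t ht) (hiv t ht) (hv t ht)⟩

/-- **Decay of a non-quadratic energy** (abstract form of Proposition 2.4).
Given the differential inequalities (i)–(iv) and the Poincaré-type inequality (v),
for every `ε > 0` there are `c₁, c₂ > 0` (depending only on `C₁, C₂, C₃, λ₁, ε`)
such that `E = a + c₁ f g + c₂ g²` satisfies `E′ + (2−ε) f² + d g + h² ≤ 0`. -/
theorem nonquadratic_energy_decay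
    (C₁ C₂ C₃ lam₁ : ℝ) (hC₁ : 0 < C₁) (hC₂ : 0 < C₂) (hC₃ : 0 < C₃)
    (hlam : 0 < lam₁) (ε : ℝ) (hε : 0 < ε) :
    ∃ c₁ > (0:ℝ), ∃ c₂ > (0:ℝ),
      ∀ a a' f f' g g' d h : ℝ → ℝ,
        (∀ t, 0 ≤ t → HasDerivWithinAt a (a' t) (Set.Ici 0) t) →
        (∀ t, 0 ≤ t → HasDerivWithinAt f (f' t) (Set.Ici 0) t) →
        (∀ t, 0 ≤ t → HasDerivWithinAt g (g' t) (Set.Ici 0) t) →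
        (∀ t, 0 ≤ t → 0 ≤ a t) → (∀ t, 0 ≤ t → 0 ≤ f t) →
        (∀ t, 0 ≤ t → 0 ≤ g t) → (∀ t, 0 ≤ t → 0 ≤ d t) →
        (∀ t, 0 ≤ t → 0 ≤ h t) →
        (∀ t, 0 ≤ t → a' t + 2 * f t ^ 2 ≤ C₁ * g t * d t) →
        (∀ t, 0 ≤ t → f' t + (1 / C₂) * d t ≤ C₃ * f t) →
        (∀ t, 0 ≤ t → g' t + (1 / C₂) * g t ≤ 0) →
        (∀ t, 0 ≤ t → 2 * g t * g' t + 2 * h t ^ 2 ≤ 0) →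
        (∀ t, 0 ≤ t → lam₁ * g t ^ 2 ≤ h t ^ 2) →
        ∀ t, 0 ≤ t →
          HasDerivWithinAt (fun s => a s + c₁ * (f s * g s) + c₂ * g s ^ 2)
            (a' t + c₁ * (f' t * g t + f t * g' t) + c₂ * (2 * g t * g' t))
            (Set.Ici 0) t ∧
          a' t + c₁ * (f' t * g t + f t * g' t) + c₂ * (2 * g t * g' t)
            + (2 - ε) * f t ^ 2 + d t * g t + h t ^ 2 ≤ 0 :=
  nonquadratic_energy_decay_general C₁ C₂ C₃ lam₁ hC₁ hC₂ hlam ε hε
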